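/- For the generalized Dunkl oscillator (Dunkl–Smorodinsky–Winternitz system) Ĥ = π̂²/2 + Σᵢ(βᵢ + γᵢR̂ᵢ)/(2x̂ᵢ²) + ω²x̂²/2, each one-dimensional operator F̂ᵢ = π̂ᵢ² + (βᵢ + γᵢR̂ᵢ)/x̂ᵢ² + ω²x̂ᵢ² commutes with Ĥ, and Ĥ = (1/2)Σᵢ F̂ᵢ. -/

import Mathlib

open Complex BigOperators Finset

noncomputable section

variable {N : ℕ}

/-- Reflection of the `i`-th coordinate: `σᵢ(x)` flips the sign of `xᵢ`. -/
def flipC (i : Fin N) (x : Fin N → ℝ) : Fin N → ℝ := Function.update x i (-(x i))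

/-- The reflection operator `R̂ᵢ f (x) = f (σᵢ x)`. -/
def Rop (i : Fin N) (f : (Fin N → ℝ) → ℂ) : (Fin N → ℝ) → ℂ := fun x => f (flipC i x)

/-- The Dunkl derivative `Dᵢ f (x) = ∂ᵢ f(x) + (μᵢ/xᵢ)(f(x) - f(σᵢ x))`. -/
def Dop (μ : Fin N → ℝ) (i : Fin N) (f : (Fin N → ℝ) → ℂ) : (Fin N → ℝ) → ℂ :=
  fun x => fderiv ℝ f x (Pi.single i 1) + ((μ i : ℂ) / (x i : ℂ)) * (f x - f (flipC i x))

/-- The Dunkl momentum operator `π̂ᵢ = -iℏ Dᵢ`. -/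
def Pop (μ : Fin N → ℝ) (hb : ℝ) (i : Fin N) (f : (Fin N → ℝ) → ℂ) : (Fin N → ℝ) → ℂ :=
  fun x => -(Complex.I * (hb : ℂ)) * Dop μ i f x

/-- The Dunkl angular momentum operator `Λ̂ᵢⱼ = x̂ᵢ π̂ⱼ - x̂ⱼ π̂ᵢ`. -/
def Lam (μ : Fin N → ℝ) (hb : ℝ) (i j : Fin N) (f : (Fin N → ℝ) → ℂ) : (Fin N → ℝ) → ℂ :=
  fun x => (x i : ℂ) * Pop μ hb j f x - (x j : ℂ) * Pop μ hb i f x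

/-- The complement of the coordinate hyperplanes in `ℝ^N`. -/
def Udom (N : ℕ) : Set (Fin N → ℝ) := {x | ∀ i, x i ≠ 0}

/-- The Dunkl–Smorodinsky–Winternitz Hamiltonian
`Ĥ = π̂²/2 + Σᵢ (βᵢ + γᵢ R̂ᵢ)/(2x̂ᵢ²) + ω² x̂²/2`. -/
def Hsw (μ β γ : Fin N → ℝ) (hb ω : ℝ) (f : (Fin N → ℝ) → ℂ) : (Fin N → ℝ) → ℂ :=
  fun x => (1 / 2 : ℂ) * ∑ i, Pop μ hb i (Pop μ hb i f) x
    + ∑ i, ((β i : ℂ) * f x + (γ i : ℂ) * Rop i f x) / (2 * (x i : ℂ) ^ 2)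
    + (ω : ℂ) ^ 2 / 2 * (∑ i, (x i : ℂ) ^ 2) * f x

/-- The one-dimensional operators `F̂ᵢ = π̂ᵢ² + (βᵢ + γᵢ R̂ᵢ)/x̂ᵢ² + ω² x̂ᵢ²`. -/
def Fsw (μ β γ : Fin N → ℝ) (hb ω : ℝ) (i : Fin N) (f : (Fin N → ℝ) → ℂ) : (Fin N → ℝ) → ℂ :=
  fun x => Pop μ hb i (Pop μ hb i f) x
    + ((β i : ℂ) * f x + (γ i : ℂ) * Rop i f x) / (x i : ℂ) ^ 2
    + (ω : ℂ) ^ 2 * (x i : ℂ) ^ 2 * f x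

-- basic flip lemmas
lemma flipC_self (i : Fin N) (x) : flipC i x i = -(x i) := Function.update_self i _ x

lemma flipC_ne {i j : Fin N} (h : j ≠ i) (x) : flipC i x j = x j := Function.update_of_ne h _ x

lemma flipC_flipC (i : Fin N) (x) : flipC i (flipC i x) = x := by
  funext k
  by_cases hk : k = i
  · subst hk; rw [flipC_self, flipC_self, neg_neg]
  · rw [flipC_ne hk, flipC_ne hk]

lemma flipC_comm (i j : Fin N) (x) : flipC i (flipC j x) = flipC j (flipC i x) := by
  by_cases hij : i = j
  · subst hij; rfl
  funext k
  by_cases hk : k = i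
  · subst hk
    simp [flipC_self, flipC_ne hij, flipC_ne (Ne.symm hij)]
  · by_cases hk' : k = j
    · subst hk'
      simp [flipC_self, flipC_ne hk, flipC_ne (Ne.symm hij)]
    · simp [flipC_ne hk, flipC_ne hk']

lemma flipC_mem {x : Fin N → ℝ} (hx : x ∈ Udom N) (i : Fin N) : flipC i x ∈ Udom N := by
  intro j
  by_cases hj : j = i
  · subst hj; rw [flipC_self]; simpa using hx j
  · rw [flipC_ne hj]; exact hx j

lemma isOpen_Udom : IsOpen (Udom N) := by
  have : Udom N = ⋂ i, (fun x : Fin N → ℝ => x i) ⁻¹' {(0:ℝ)}ᶜ := by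
    ext x; simp [Udom]
  rw [this]
  exact isOpen_iInter_of_finite fun i =>
    (isOpen_compl_singleton).preimage (continuous_apply i)

-- flip as a continuous linear map
def flipL (i : Fin N) : (Fin N → ℝ) →L[ℝ] (Fin N → ℝ) :=
  (LinearMap.pi (fun j => if j = i then -(LinearMap.proj j) else
    LinearMap.proj j)).toContinuousLinearMap

lemma flipL_apply (i : Fin N) (x : Fin N → ℝ) : flipL i x = flipC i x := by
  funext j
  by_cases hj : j = i
  · subst hj
    simp [flipL, flipC_self, LinearMap.pi_apply]
  · simp [flipL, flipC_ne hj, LinearMap.pi_apply, hj]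

lemma flipC_single_ne {i j : Fin N} (h : i ≠ j) :
    flipC j (Pi.single i (1:ℝ)) = Pi.single i 1 := by
  funext k
  by_cases hk : k = j
  · subst hk
    simp [flipC_self, Pi.single_eq_of_ne (Ne.symm h)]
  · rw [flipC_ne hk]

-- smoothness class
def Sm (N : ℕ) (g : (Fin N → ℝ) → ℂ) : Prop := ContDiffOn ℝ ((⊤:ℕ∞) : WithTop ℕ∞) g (Udom N)

def Del (i : Fin N) (g : (Fin N → ℝ) → ℂ) : (Fin N → ℝ) → ℂ :=
  fun x => fderiv ℝ g x (Pi.single i 1)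

lemma Sm.del {g} (hg : Sm N g) (i : Fin N) : Sm N (Del i g) :=
  (hg.fderiv_of_isOpen isOpen_Udom (le_of_eq rfl)).clm_apply contDiffOn_const

lemma Sm.diffAt {g} (hg : Sm N g) {x} (hx : x ∈ Udom N) : DifferentiableAt ℝ g x :=
  (hg.contDiffAt (isOpen_Udom.mem_nhds hx)).differentiableAt (by simp)

lemma Sm.rop {g} (hg : Sm N g) (i : Fin N) : Sm N (Rop i g) := by
  have h : Rop i g = g ∘ (flipL i) := funext fun x => by simp [Rop, flipL_apply]
  rw [h]
  exact hg.comp ((flipL i).contDiff.contDiffOn)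
    (fun x hx => show flipL i x ∈ Udom N by rw [flipL_apply]; exact flipC_mem hx i)

-- coefficient functions
lemma contDiff_projC (j : Fin N) : ContDiff ℝ ((⊤:ℕ∞) : WithTop ℕ∞) (fun y : Fin N → ℝ => (y j : ℂ)) :=
  Complex.ofRealCLM.contDiff.comp (contDiff_apply ℝ ℝ j)

lemma Sm_coef_div (j : Fin N) (a : ℂ) (k : ℕ) :
    Sm N (fun y => a / ((y j : ℂ)) ^ k) := by
  have h1 : ContDiffOn ℝ ((⊤:ℕ∞) : WithTop ℕ∞) (fun y : Fin N → ℝ => (((y j : ℂ)) ^ k)⁻¹) (Udom N) :=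
    ContDiffOn.inv ((contDiff_projC j).pow k).contDiffOn
      (fun x hx => pow_ne_zero k (Complex.ofReal_ne_zero.2 (hx j)))
  have := contDiffOn_const (c := a) (s := Udom N) (𝕜 := ℝ) |>.mul h1
  simpa only [Sm, div_eq_mul_inv] using this

lemma Sm_coef_sq (j : Fin N) (a : ℂ) : Sm N (fun y => a * ((y j : ℂ)) ^ 2) :=
  (contDiffOn_const.mul ((contDiff_projC j).pow 2).contDiffOn)

lemma cdiv_diffAt {t : ℝ} (ht : t ≠ 0) (a : ℂ) (k : ℕ) :
    DifferentiableAt ℝ (fun s : ℝ => a / ((s : ℂ)) ^ k) t := by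
  have h1 : ContDiffAt ℝ ((⊤:ℕ∞) : WithTop ℕ∞) (fun s : ℝ => (((s : ℂ)) ^ k)⁻¹) t :=
    ContDiffAt.inv ((Complex.ofRealCLM.contDiff.pow k).contDiffAt)
      (pow_ne_zero k (Complex.ofReal_ne_zero.2 ht))
  have h2 := (contDiffAt_const (c := a)).mul h1
  have h3 : DifferentiableAt ℝ (fun s : ℝ => a * (((s : ℂ)) ^ k)⁻¹) t :=
    h2.differentiableAt (by simp)
  simpa only [div_eq_mul_inv] using h3

lemma csq_diffAt (t : ℝ) (a : ℂ) :
    DifferentiableAt ℝ (fun s : ℝ => a * ((s : ℂ)) ^ 2) t :=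
  (differentiableAt_const a).mul ((Complex.ofRealCLM.differentiableAt).pow 2)

-- Dop in terms of Del and Rop
lemma pop_eq (μ : Fin N → ℝ) (hb : ℝ) (i : Fin N) (g : (Fin N → ℝ) → ℂ) :
    Pop μ hb i g = fun y => -(Complex.I * (hb : ℂ)) * Dop μ i g y := rfl

lemma dop_eq (μ : Fin N → ℝ) (i : Fin N) (g : (Fin N → ℝ) → ℂ) :
    Dop μ i g = fun y => Del i g y +
      (fun t : ℝ => (μ i : ℂ) / ((t : ℂ)) ^ 1) (y i) * (g y - Rop i g y) := by
  funext y; simp only [Dop, Del, Rop, pow_one]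

lemma Sm.dop {g} (hg : Sm N g) (μ : Fin N → ℝ) (i : Fin N) : Sm N (Dop μ i g) := by
  rw [dop_eq]
  exact (hg.del i).add ((Sm_coef_div i (μ i) 1).mul (hg.sub (hg.rop i)))

lemma Sm.pop {g} (hg : Sm N g) (μ : Fin N → ℝ) (hb : ℝ) (i : Fin N) :
    Sm N (Pop μ hb i g) :=
  contDiffOn_const.mul (hg.dop μ i)

def Vop (β γ : Fin N → ℝ) (ω : ℝ) (j : Fin N) (g : (Fin N → ℝ) → ℂ) :
    (Fin N → ℝ) → ℂ :=
  fun y => ((β j : ℂ) * g y + (γ j : ℂ) * g (flipC j y)) / ((y j : ℂ)) ^ 2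
    + (ω : ℂ) ^ 2 * ((y j : ℂ)) ^ 2 * g y

lemma vop_eq (β γ : Fin N → ℝ) (ω : ℝ) (j : Fin N) (g : (Fin N → ℝ) → ℂ) :
    Vop β γ ω j g = fun y =>
      (fun t : ℝ => (β j : ℂ) / ((t : ℂ)) ^ 2) (y j) * g y
      + (fun t : ℝ => (γ j : ℂ) / ((t : ℂ)) ^ 2) (y j) * Rop j g y
      + (fun t : ℝ => ((ω : ℂ) ^ 2) * ((t : ℂ)) ^ 2) (y j) * g y := by
  funext y; simp only [Vop, Rop]; ring

lemma Sm.vop {g} (hg : Sm N g) (β γ : Fin N → ℝ) (ω : ℝ) (j : Fin N) :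
    Sm N (Vop β γ ω j g) := by
  rw [vop_eq]
  exact (((Sm_coef_div j _ 2).mul hg).add ((Sm_coef_div j _ 2).mul (hg.rop j))).add
    ((Sm_coef_sq j _).mul hg)

lemma fsw_eq (μ β γ : Fin N → ℝ) (hb ω : ℝ) (i : Fin N) (g : (Fin N → ℝ) → ℂ) :
    Fsw μ β γ hb ω i g = fun y => Pop μ hb i (Pop μ hb i g) y + Vop β γ ω i g y := by
  funext y; simp only [Fsw, Vop, Rop]; ring

lemma Sm.fsw {g} (hg : Sm N g) (μ β γ : Fin N → ℝ) (hb ω : ℝ) (i : Fin N) :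
    Sm N (Fsw μ β γ hb ω i g) := by
  rw [fsw_eq]
  exact ((hg.pop μ hb i).pop μ hb i).add (hg.vop β γ ω i)

notation "∞'" => ((⊤:ℕ∞) : WithTop ℕ∞)

lemma Sm.cdAt {g} (hg : Sm N g) {x} (hx : x ∈ Udom N) : ContDiffAt ℝ ∞' g x :=
  hg.contDiffAt (isOpen_Udom.mem_nhds hx)

lemma eqOn_fderiv {F G : (Fin N → ℝ) → ℂ} (h : ∀ y ∈ Udom N, F y = G y) {x}
    (hx : x ∈ Udom N) : fderiv ℝ F x = fderiv ℝ G x :=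
  Filter.EventuallyEq.fderiv_eq (Filter.eventuallyEq_of_mem (isOpen_Udom.mem_nhds hx) h)

lemma Dop_congr {F G : (Fin N → ℝ) → ℂ} (μ : Fin N → ℝ) (i : Fin N)
    (h : ∀ y ∈ Udom N, F y = G y) {x} (hx : x ∈ Udom N) :
    Dop μ i F x = Dop μ i G x := by
  simp only [Dop]
  rw [eqOn_fderiv h hx, h x hx, h _ (flipC_mem hx i)]

lemma Pop_congr {F G : (Fin N → ℝ) → ℂ} (μ : Fin N → ℝ) (hb : ℝ) (i : Fin N)
    (h : ∀ y ∈ Udom N, F y = G y) {x} (hx : x ∈ Udom N) :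
    Pop μ hb i F x = Pop μ hb i G x := by
  simp only [Pop]
  rw [Dop_congr μ i h hx]

lemma Dop_add (μ : Fin N → ℝ) (i : Fin N) {F G : (Fin N → ℝ) → ℂ} {x}
    (hF : DifferentiableAt ℝ F x) (hG : DifferentiableAt ℝ G x) :
    Dop μ i (fun y => F y + G y) x = Dop μ i F x + Dop μ i G x := by
  simp only [Dop]
  rw [fderiv_fun_add hF hG]
  simp only [ContinuousLinearMap.add_apply]
  ring

lemma Dop_const_mul (μ : Fin N → ℝ) (i : Fin N) {F : (Fin N → ℝ) → ℂ} {x} (c : ℂ)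
    (hF : DifferentiableAt ℝ F x) :
    Dop μ i (fun y => c * F y) x = c * Dop μ i F x := by
  simp only [Dop]
  rw [fderiv_const_mul hF]
  simp only [ContinuousLinearMap.smul_apply, smul_eq_mul]
  ring

lemma Dop_coef_mul {c : ℝ → ℂ} {i j : Fin N} (hij : i ≠ j) (μ : Fin N → ℝ)
    {F : (Fin N → ℝ) → ℂ} {x} (hx : x ∈ Udom N)
    (hc : DifferentiableAt ℝ c (x j)) (hF : DifferentiableAt ℝ F x) :
    Dop μ i (fun y => c (y j) * F y) x = c (x j) * Dop μ i F x := by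
  have hproj : DifferentiableAt ℝ
      (⇑(ContinuousLinearMap.proj (R := ℝ) (φ := fun _ : Fin N => ℝ) j)) x :=
    (ContinuousLinearMap.proj (R := ℝ) (φ := fun _ : Fin N => ℝ) j).differentiableAt
  have hcj : DifferentiableAt ℝ (fun y : Fin N → ℝ => c (y j)) x := hc.comp x hproj
  have hkey : fderiv ℝ (fun y : Fin N → ℝ => c (y j)) x (Pi.single i 1) = 0 := by
    rw [show (fun y : Fin N → ℝ => c (y j)) =
      c ∘ (ContinuousLinearMap.proj (R := ℝ) (φ := fun _ : Fin N => ℝ) j) from rfl]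
    rw [fderiv_comp x hc hproj, (ContinuousLinearMap.proj (R := ℝ)
      (φ := fun _ : Fin N => ℝ) j).fderiv]
    have : (ContinuousLinearMap.proj (R := ℝ) (φ := fun _ : Fin N => ℝ) j)
        (Pi.single i (1:ℝ)) = 0 := by
      simp [Pi.single_eq_of_ne (Ne.symm hij)]
    simp [this]
  simp only [Dop]
  rw [fderiv_fun_mul hcj hF]
  simp only [ContinuousLinearMap.add_apply, ContinuousLinearMap.smul_apply, smul_eq_mul, hkey]
  rw [flipC_ne (Ne.symm hij)]
  ring

lemma Del_rop {g : (Fin N → ℝ) → ℂ} {i j : Fin N} (hij : i ≠ j) {x}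
    (hg : DifferentiableAt ℝ g (flipC j x)) :
    Del i (Rop j g) x = Del i g (flipC j x) := by
  have hgL : DifferentiableAt ℝ g (flipL j x) := by rwa [flipL_apply]
  have hrop : Rop j g = g ∘ (flipL j) := funext fun y => by simp [Rop, flipL_apply]
  simp only [Del, hrop]
  rw [fderiv_comp x hgL ((flipL j).differentiableAt), (flipL j).fderiv]
  have h1 : (flipL j) (Pi.single i (1:ℝ)) = Pi.single i 1 := by
    rw [flipL_apply, flipC_single_ne hij]
  simp only [ContinuousLinearMap.coe_comp', Function.comp_apply, h1, flipL_apply]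

lemma del_comm {g : (Fin N → ℝ) → ℂ} (hg : Sm N g) {x} (hx : x ∈ Udom N) (i j : Fin N) :
    Del i (Del j g) x = Del j (Del i g) x := by
  have hca : ContDiffAt ℝ ∞' g x := hg.cdAt hx
  have hsymm : IsSymmSndFDerivAt ℝ g x := hca.isSymmSndFDerivAt (by
    rw [minSmoothness_of_isRCLikeNormedField]
    exact WithTop.coe_le_coe.2 le_top)
  have hfd : DifferentiableAt ℝ (fderiv ℝ g) x :=
    (hca.fderiv_right (m := 1) (by
    rw [show ((1:WithTop ℕ∞)+1) = (((2:ℕ∞)):WithTop ℕ∞) from rfl, WithTop.coe_le_coe]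
    exact le_top)).differentiableAt one_ne_zero
  have key : ∀ v w : Fin N → ℝ, fderiv ℝ (fun y => fderiv ℝ g y v) x w =
      fderiv ℝ (fderiv ℝ g) x w v := by
    intro v w
    rw [fderiv_clm_apply hfd (differentiableAt_const v)]
    simp
  show fderiv ℝ (fun y => fderiv ℝ g y (Pi.single j 1)) x (Pi.single i 1)
    = fderiv ℝ (fun y => fderiv ℝ g y (Pi.single i 1)) x (Pi.single j 1)
  rw [key, key]
  exact hsymm _ _

lemma Dop_rop {g : (Fin N → ℝ) → ℂ} {i j : Fin N} (hij : i ≠ j) (μ : Fin N → ℝ)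
    (hg : Sm N g) {x} (hx : x ∈ Udom N) :
    Dop μ i (Rop j g) x = Rop j (Dop μ i g) x := by
  have h1 := Del_rop (g := g) hij (x := x) (hg.diffAt (flipC_mem hx j))
  simp only [Del] at h1
  simp only [Dop, Rop] at h1 ⊢
  rw [h1, flipC_ne hij, flipC_comm j i]

lemma Del_add {F G : (Fin N → ℝ) → ℂ} {x} (i : Fin N)
    (hF : DifferentiableAt ℝ F x) (hG : DifferentiableAt ℝ G x) :
    Del i (fun y => F y + G y) x = Del i F x + Del i G x := by
  simp only [Del]
  rw [fderiv_fun_add hF hG]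
  simp [ContinuousLinearMap.add_apply]

lemma Del_sub {F G : (Fin N → ℝ) → ℂ} {x} (i : Fin N)
    (hF : DifferentiableAt ℝ F x) (hG : DifferentiableAt ℝ G x) :
    Del i (fun y => F y - G y) x = Del i F x - Del i G x := by
  simp only [Del]
  rw [fderiv_fun_sub hF hG]
  simp [ContinuousLinearMap.sub_apply]

lemma Del_coef_mul {c : ℝ → ℂ} {i j : Fin N} (hij : i ≠ j)
    {F : (Fin N → ℝ) → ℂ} {x} (hc : DifferentiableAt ℝ c (x j))
    (hF : DifferentiableAt ℝ F x) :
    Del i (fun y => c (y j) * F y) x = c (x j) * Del i F x := by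
  have hproj : DifferentiableAt ℝ
      (⇑(ContinuousLinearMap.proj (R := ℝ) (φ := fun _ : Fin N => ℝ) j)) x :=
    (ContinuousLinearMap.proj (R := ℝ) (φ := fun _ : Fin N => ℝ) j).differentiableAt
  have hcj : DifferentiableAt ℝ (fun y : Fin N → ℝ => c (y j)) x := hc.comp x hproj
  have hkey : fderiv ℝ (fun y : Fin N → ℝ => c (y j)) x (Pi.single i 1) = 0 := by
    rw [show (fun y : Fin N → ℝ => c (y j)) =
      c ∘ (ContinuousLinearMap.proj (R := ℝ) (φ := fun _ : Fin N => ℝ) j) from rfl]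
    rw [fderiv_comp x hc hproj, (ContinuousLinearMap.proj (R := ℝ)
      (φ := fun _ : Fin N => ℝ) j).fderiv]
    have : (ContinuousLinearMap.proj (R := ℝ) (φ := fun _ : Fin N => ℝ) j)
        (Pi.single i (1:ℝ)) = 0 := by
      simp [Pi.single_eq_of_ne (Ne.symm hij)]
    simp [this]
  simp only [Del]
  rw [fderiv_fun_mul hcj hF]
  simp only [ContinuousLinearMap.add_apply, ContinuousLinearMap.smul_apply, smul_eq_mul, hkey]
  ring

lemma Dop_Dop_expand (μ : Fin N → ℝ) {i j : Fin N} (hij : i ≠ j)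
    {g : (Fin N → ℝ) → ℂ} (hg : Sm N g) {x} (hx : x ∈ Udom N) :
    Dop μ i (Dop μ j g) x
      = Del i (Del j g) x
        + (μ j : ℂ)/(x j : ℂ) * (Del i g x - Del i g (flipC j x))
        + (μ i : ℂ)/(x i : ℂ) * (Del j g x - Del j g (flipC i x))
        + ((μ i : ℂ)/(x i : ℂ)) * ((μ j : ℂ)/(x j : ℂ)) *
            ((g x - g (flipC j x)) - (g (flipC i x) - g (flipC j (flipC i x)))) := by
  have hxi := flipC_mem hx i
  have hsub : DifferentiableAt ℝ (fun y => g y - Rop j g y) x :=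
    (hg.diffAt hx).sub ((hg.rop j).diffAt hx)
  have hprod : DifferentiableAt ℝ
      (fun y => (fun t : ℝ => (μ j : ℂ) / ((t : ℂ)) ^ 1) (y j) * (g y - Rop j g y)) x :=
    Sm.diffAt ((Sm_coef_div j (μ j) 1).mul (hg.sub (hg.rop j))) hx
  have hDel1 : Del i (Dop μ j g) x
      = Del i (Del j g) x + (μ j : ℂ)/(x j : ℂ) * (Del i g x - Del i g (flipC j x)) := by
    rw [dop_eq μ j g]
    rw [Del_add i ((hg.del j).diffAt hx) hprod]
    rw [Del_coef_mul hij (cdiv_diffAt (hx j) (μ j) 1) hsub]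
    rw [Del_sub i (hg.diffAt hx) ((hg.rop j).diffAt hx)]
    rw [Del_rop hij (hg.diffAt (flipC_mem hx j))]
    simp [pow_one]
  have hv1 : Dop μ j g x = Del j g x + (μ j : ℂ)/(x j : ℂ) * (g x - g (flipC j x)) := rfl
  have hv2 : Dop μ j g (flipC i x) = Del j g (flipC i x)
      + (μ j : ℂ)/(x j : ℂ) * (g (flipC i x) - g (flipC j (flipC i x))) := by
    show fderiv ℝ g (flipC i x) (Pi.single j 1)
        + ((μ j : ℂ) / ((flipC i x) j : ℂ)) * (g (flipC i x) - g (flipC j (flipC i x))) = _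
    rw [flipC_ne (Ne.symm hij)]
    rfl
  have hexp : Dop μ i (Dop μ j g) x = Del i (Dop μ j g) x
      + (μ i : ℂ)/(x i : ℂ) * (Dop μ j g x - Dop μ j g (flipC i x)) := rfl
  rw [hexp, hDel1, hv1, hv2]
  ring

lemma Dop_comm (μ : Fin N → ℝ) {i j : Fin N} {g : (Fin N → ℝ) → ℂ} (hg : Sm N g)
    {x} (hx : x ∈ Udom N) :
    Dop μ i (Dop μ j g) x = Dop μ j (Dop μ i g) x := by
  by_cases hij : i = j
  · subst hij; rfl
  rw [Dop_Dop_expand μ hij hg hx, Dop_Dop_expand μ (Ne.symm hij) hg hx,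
    del_comm hg hx i j, flipC_comm j i]
  ring

lemma Pop_comm {g : (Fin N → ℝ) → ℂ} (hg : Sm N g) (μ : Fin N → ℝ) (hb : ℝ)
    {i j : Fin N} {x} (hx : x ∈ Udom N) :
    Pop μ hb i (Pop μ hb j g) x = Pop μ hb j (Pop μ hb i g) x := by
  rw [pop_eq μ hb j g, pop_eq μ hb i g]
  simp only [Pop]
  rw [Dop_const_mul μ i _ ((hg.dop μ j).diffAt hx),
      Dop_const_mul μ j _ ((hg.dop μ i).diffAt hx),
      Dop_comm μ hg hx]

lemma P2_comm {g : (Fin N → ℝ) → ℂ} (hg : Sm N g) (μ : Fin N → ℝ) (hb : ℝ)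
    {i j : Fin N} {x} (hx : x ∈ Udom N) :
    Pop μ hb i (Pop μ hb i (Pop μ hb j (Pop μ hb j g))) x
      = Pop μ hb j (Pop μ hb j (Pop μ hb i (Pop μ hb i g))) x := by
  have s1 : ∀ y ∈ Udom N, Pop μ hb i (Pop μ hb j (Pop μ hb j g)) y
      = Pop μ hb j (Pop μ hb i (Pop μ hb j g)) y :=
    fun y hy => Pop_comm (hg.pop μ hb j) μ hb hy
  have s2 : ∀ y ∈ Udom N, Pop μ hb j (Pop μ hb i (Pop μ hb j g)) y
      = Pop μ hb j (Pop μ hb j (Pop μ hb i g)) y :=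
    fun y hy => Pop_congr μ hb j (fun z hz => Pop_comm hg μ hb hz) hy
  calc Pop μ hb i (Pop μ hb i (Pop μ hb j (Pop μ hb j g))) x
      = Pop μ hb i (Pop μ hb j (Pop μ hb i (Pop μ hb j g))) x :=
        Pop_congr μ hb i s1 hx
    _ = Pop μ hb i (Pop μ hb j (Pop μ hb j (Pop μ hb i g))) x :=
        Pop_congr μ hb i (fun y hy => Pop_congr μ hb j
          (fun z hz => Pop_comm hg μ hb hz) hy) hx
    _ = Pop μ hb j (Pop μ hb i (Pop μ hb j (Pop μ hb i g))) x :=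
        Pop_comm ((hg.pop μ hb i).pop μ hb j) μ hb hx
    _ = Pop μ hb j (Pop μ hb j (Pop μ hb i (Pop μ hb i g))) x :=
        Pop_congr μ hb j (fun y hy => Pop_comm (hg.pop μ hb i) μ hb hy) hx

lemma Dop_vop {i j : Fin N} (hij : i ≠ j) (μ β γ : Fin N → ℝ) (w : ℝ)
    {g : (Fin N → ℝ) → ℂ} (hg : Sm N g) {x} (hx : x ∈ Udom N) :
    Dop μ i (Vop β γ w j g) x = Vop β γ w j (Dop μ i g) x := by
  rw [vop_eq]
  have d1 : DifferentiableAt ℝ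
      (fun y => (fun t : ℝ => (β j : ℂ) / ((t : ℂ)) ^ 2) (y j) * g y) x :=
    Sm.diffAt ((Sm_coef_div j (β j) 2).mul hg) hx
  have d2 : DifferentiableAt ℝ
      (fun y => (fun t : ℝ => (γ j : ℂ) / ((t : ℂ)) ^ 2) (y j) * Rop j g y) x :=
    Sm.diffAt ((Sm_coef_div j (γ j) 2).mul (hg.rop j)) hx
  have d3 : DifferentiableAt ℝ
      (fun y => (fun t : ℝ => ((w : ℂ) ^ 2) * ((t : ℂ)) ^ 2) (y j) * g y) x :=
    Sm.diffAt ((Sm_coef_sq j ((w:ℂ)^2)).mul hg) hx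
  rw [Dop_add μ i (d1.fun_add d2) d3, Dop_add μ i d1 d2,
      Dop_coef_mul hij μ hx (cdiv_diffAt (hx j) (β j) 2) (hg.diffAt hx),
      Dop_coef_mul hij μ hx (cdiv_diffAt (hx j) (γ j) 2) ((hg.rop j).diffAt hx),
      Dop_coef_mul hij μ hx (csq_diffAt (x j) ((w:ℂ)^2)) (hg.diffAt hx),
      Dop_rop hij μ hg hx]
  simp only [Vop, Rop]
  ring

lemma Pop_vop {i j : Fin N} (hij : i ≠ j) (μ β γ : Fin N → ℝ) (hb w : ℝ)
    {g : (Fin N → ℝ) → ℂ} (hg : Sm N g) {x} (hx : x ∈ Udom N) :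
    Pop μ hb i (Vop β γ w j g) x = Vop β γ w j (Pop μ hb i g) x := by
  rw [pop_eq μ hb i g]
  simp only [Pop]
  rw [Dop_vop hij μ β γ w hg hx]
  simp only [Vop]
  ring

lemma P2_vop {i j : Fin N} (hij : i ≠ j) (μ β γ : Fin N → ℝ) (hb w : ℝ)
    {g : (Fin N → ℝ) → ℂ} (hg : Sm N g) {x} (hx : x ∈ Udom N) :
    Pop μ hb i (Pop μ hb i (Vop β γ w j g)) x
      = Vop β γ w j (Pop μ hb i (Pop μ hb i g)) x := by
  have h1 : ∀ y ∈ Udom N, Pop μ hb i (Vop β γ w j g) y = Vop β γ w j (Pop μ hb i g) y :=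
    fun y hy => Pop_vop hij μ β γ hb w hg hy
  rw [Pop_congr μ hb i h1 hx]
  exact Pop_vop hij μ β γ hb w (hg.pop μ hb i) hx

lemma Vop_vop {i j : Fin N} (hij : i ≠ j) (β γ : Fin N → ℝ) (w : ℝ)
    (g : (Fin N → ℝ) → ℂ) (x : Fin N → ℝ) :
    Vop β γ w i (Vop β γ w j g) x = Vop β γ w j (Vop β γ w i g) x := by
  simp only [Vop, flipC_ne hij, flipC_ne (Ne.symm hij), flipC_comm j i]
  ring

lemma Pop_add (μ : Fin N → ℝ) (hb : ℝ) (i : Fin N) {F G : (Fin N → ℝ) → ℂ} {x}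
    (hF : DifferentiableAt ℝ F x) (hG : DifferentiableAt ℝ G x) :
    Pop μ hb i (fun y => F y + G y) x = Pop μ hb i F x + Pop μ hb i G x := by
  simp only [Pop]
  rw [Dop_add μ i hF hG]
  ring

lemma P2_add {F G : (Fin N → ℝ) → ℂ} (hF : Sm N F) (hG : Sm N G)
    (μ : Fin N → ℝ) (hb : ℝ) (i : Fin N) {x} (hx : x ∈ Udom N) :
    Pop μ hb i (Pop μ hb i (fun y => F y + G y)) x
      = Pop μ hb i (Pop μ hb i F) x + Pop μ hb i (Pop μ hb i G) x := by
  have h1 : ∀ y ∈ Udom N, Pop μ hb i (fun y => F y + G y) y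
      = Pop μ hb i F y + Pop μ hb i G y :=
    fun y hy => Pop_add μ hb i (hF.diffAt hy) (hG.diffAt hy)
  rw [Pop_congr μ hb i h1 hx]
  exact Pop_add μ hb i ((hF.pop μ hb i).diffAt hx) ((hG.pop μ hb i).diffAt hx)

lemma Vop_add (β γ : Fin N → ℝ) (w : ℝ) (i : Fin N) (F G : (Fin N → ℝ) → ℂ)
    (x : Fin N → ℝ) :
    Vop β γ w i (fun y => F y + G y) x = Vop β γ w i F x + Vop β γ w i G x := by
  simp only [Vop]
  ring

lemma Fsw_comm (μ β γ : Fin N → ℝ) (hb w : ℝ) {i j : Fin N}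
    {g : (Fin N → ℝ) → ℂ} (hg : Sm N g) {x} (hx : x ∈ Udom N) :
    Fsw μ β γ hb w i (Fsw μ β γ hb w j g) x
      = Fsw μ β γ hb w j (Fsw μ β γ hb w i g) x := by
  by_cases hij : i = j
  · subst hij; rfl
  have hP2j : Sm N (Pop μ hb j (Pop μ hb j g)) := (hg.pop μ hb j).pop μ hb j
  have hVj : Sm N (Vop β γ w j g) := hg.vop β γ w j
  have hP2i : Sm N (Pop μ hb i (Pop μ hb i g)) := (hg.pop μ hb i).pop μ hb i
  have hVi : Sm N (Vop β γ w i g) := hg.vop β γ w i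
  rw [fsw_eq μ β γ hb w j g, fsw_eq μ β γ hb w i g]
  rw [congrFun (fsw_eq μ β γ hb w i _) x, congrFun (fsw_eq μ β γ hb w j _) x]
  rw [P2_add hP2j hVj μ hb i hx, Vop_add β γ w i _ _ x,
      P2_add hP2i hVi μ hb j hx, Vop_add β γ w j _ _ x,
      P2_comm hg μ hb hx,
      P2_vop hij μ β γ hb w hg hx,
      P2_vop (Ne.symm hij) μ β γ hb w hg hx,
      Vop_vop hij β γ w g x]
  ring

lemma Dop_lin (μ : Fin N → ℝ) (i : Fin N) {h : Fin N → (Fin N → ℝ) → ℂ}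
    (hh : ∀ j, Sm N (h j)) {x} (hx : x ∈ Udom N) (c : ℂ) :
    Dop μ i (fun y => c * ∑ j, h j y) x = c * ∑ j, Dop μ i (h j) x := by
  have hda : ∀ j ∈ Finset.univ, DifferentiableAt ℝ (h j) x :=
    fun j _ => (hh j).diffAt hx
  have hsum : DifferentiableAt ℝ (fun y => ∑ j, h j y) x := DifferentiableAt.fun_sum hda
  rw [Dop_const_mul μ i c hsum]
  congr 1
  simp only [Dop]
  rw [fderiv_fun_sum hda]
  simp only [ContinuousLinearMap.sum_apply]
  rw [Finset.sum_add_distrib]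
  congr 1
  rw [← Finset.sum_sub_distrib, Finset.mul_sum]

lemma Pop_lin (μ : Fin N → ℝ) (hb : ℝ) (i : Fin N) {h : Fin N → (Fin N → ℝ) → ℂ}
    (hh : ∀ j, Sm N (h j)) {x} (hx : x ∈ Udom N) (c : ℂ) :
    Pop μ hb i (fun y => c * ∑ j, h j y) x = c * ∑ j, Pop μ hb i (h j) x := by
  simp only [Pop]
  rw [Dop_lin μ i hh hx c, ← Finset.mul_sum]
  ring

lemma P2_lin (μ : Fin N → ℝ) (hb : ℝ) (i : Fin N) {h : Fin N → (Fin N → ℝ) → ℂ}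
    (hh : ∀ j, Sm N (h j)) {x} (hx : x ∈ Udom N) (c : ℂ) :
    Pop μ hb i (Pop μ hb i (fun y => c * ∑ j, h j y)) x
      = c * ∑ j, Pop μ hb i (Pop μ hb i (h j)) x := by
  have h1 : ∀ y ∈ Udom N, Pop μ hb i (fun y => c * ∑ j, h j y) y
      = c * ∑ j, Pop μ hb i (h j) y := fun y hy => Pop_lin μ hb i hh hy c
  rw [Pop_congr μ hb i h1 hx]
  exact Pop_lin μ hb i (fun j => (hh j).pop μ hb i) hx c

lemma Fsw_lin (μ β γ : Fin N → ℝ) (hb w : ℝ) (i : Fin N)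
    {h : Fin N → (Fin N → ℝ) → ℂ} (hh : ∀ j, Sm N (h j)) {x} (hx : x ∈ Udom N) :
    Fsw μ β γ hb w i (fun y => (1/2 : ℂ) * ∑ j, h j y) x
      = (1/2 : ℂ) * ∑ j, Fsw μ β γ hb w i (h j) x := by
  rw [congrFun (fsw_eq μ β γ hb w i _) x]
  rw [P2_lin μ hb i hh hx (1/2)]
  have hR : ∀ j : Fin N, Fsw μ β γ hb w i (h j) x
      = Pop μ hb i (Pop μ hb i (h j)) x + Vop β γ w i (h j) x :=
    fun j => congrFun (fsw_eq μ β γ hb w i (h j)) x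
  simp only [hR]
  rw [Finset.sum_add_distrib, mul_add]
  congr 1
  simp only [Vop, Finset.mul_sum, Finset.sum_mul]
  simp only [← Finset.sum_add_distrib, Finset.sum_div]
  exact Finset.sum_congr rfl fun j _ => by ring

lemma Hsw_eq (μ β γ : Fin N → ℝ) (hb w : ℝ) (g : (Fin N → ℝ) → ℂ) (x : Fin N → ℝ) :
    Hsw μ β γ hb w g x = (1/2 : ℂ) * ∑ i, Fsw μ β γ hb w i g x := by
  simp only [Hsw, Fsw]
  simp only [Finset.mul_sum, Finset.sum_mul]
  simp only [← Finset.sum_add_distrib]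
  exact Finset.sum_congr rfl fun j _ => by ring

/-- Each `F̂ᵢ` commutes with the Dunkl–Smorodinsky–Winternitz Hamiltonian,
and `Ĥ = (1/2) Σᵢ F̂ᵢ`. -/
theorem dunkl_smorodinsky_winternitz (N : ℕ) (hN : 1 ≤ N) (μ β γ : Fin N → ℝ)
    (hb ω : ℝ) (hbpos : hb > 0) (hω : ω > 0)
    (f : (Fin N → ℝ) → ℂ) (hf : ContDiffOn ℝ (⊤ : ℕ∞) f (Udom N)) :
    ∀ x ∈ Udom N,
      (∀ i : Fin N,
        Hsw μ β γ hb ω (Fsw μ β γ hb ω i f) x = Fsw μ β γ hb ω i (Hsw μ β γ hb ω f) x) ∧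
      Hsw μ β γ hb ω f x = (1 / 2 : ℂ) * ∑ i, Fsw μ β γ hb ω i f x := by
  intro x hx
  have hf' : Sm N f := hf.of_le (by simp)
  refine ⟨fun i => ?_, Hsw_eq μ β γ hb ω f x⟩
  rw [Hsw_eq μ β γ hb ω (Fsw μ β γ hb ω i f) x]
  rw [Finset.sum_congr rfl (fun j (_ : j ∈ Finset.univ) =>
    Fsw_comm μ β γ hb ω (i := j) (j := i) hf' hx)]
  rw [show Hsw μ β γ hb ω f = fun y => (1/2:ℂ) * ∑ j, Fsw μ β γ hb ω j f y from
    funext fun y => Hsw_eq μ β γ hb ω f y]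
  exact (Fsw_lin μ β γ hb ω i (fun j => hf'.fsw μ β γ hb ω j) hx).symm


end
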